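/- arXiv:1101.1348 — 2 statements merged into one kernel-verified Lean document; each statement's English description precedes it below -/
import Mathlib

section
/- If a homeomorphism f of a compact metric space has only finitely many chain components, then every chain component is locally maximal (isolated): it has a compact neighborhood U such that the chain component equals the intersection over n ∈ ℤ of f^n(U). -/
/-- `x ⇝ y`: for every `δ > 0` there is a finite `δ`-pseudo-orbit from `x` to `y`. -/
def ChainReach {M : Type*} [MetricSpace M] (f : M ≃ M) (x y : M) : Prop :=
  ∀ δ > (0 : ℝ), ∃ n : ℕ, 1 ≤ n ∧ ∃ c : ℕ → M, c 0 = x ∧ c n = y ∧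
    ∀ i < n, dist (f (c i)) (c (i + 1)) < δ

/-- `x ↭ y` iff `x ⇝ y` and `y ⇝ x`. -/
def ChainBiReach {M : Type*} [MetricSpace M] (f : M ≃ M) (x y : M) : Prop :=
  ChainReach f x y ∧ ChainReach f y x

/-- The chain recurrent set `R(f)`. -/
def ChainRecurrentSet {M : Type*} [MetricSpace M] (f : M ≃ M) : Set M :=
  {x | ChainReach f x x}

/-- The chain component of a point `p ∈ R(f)`. -/
def ChainComponent {M : Type*} [MetricSpace M] (f : M ≃ M) (p : M) : Set M :=
  {x | x ∈ ChainRecurrentSet f ∧ ChainBiReach f p x}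

/-!
Let `C` be the chain component of `p`. Chain reachability is a closed relation (pseudo-orbits
can be perturbed at their endpoints), so chain components are closed; with finitely many of them
the rest of `R(f)` is closed too, and a closed neighbourhood `U` of `C` misses it. If the whole
orbit of `x` stays in `U`, then, again by closedness of the relation, an ω-limit point `y` and an
α-limit point `z` of `x` are chain recurrent with `z ⇝ x ⇝ y`. Both lie in `U ∩ R(f) ⊆ C`, so
`p ⇝ z ⇝ x ⇝ y ⇝ p` and `x ∈ C`.
-/

open Filter Function Relation Set

section PseudoOrbit

variable {M : Type*} [PseudoMetricSpace M] {f : M → M} {ε δ : ℝ} {x x' y y' : M}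

variable (f) in
def PseudoOrbit (δ : ℝ) : M → M → Prop :=
  TransGen fun a b => dist (f a) b < δ

theorem pseudoOrbit_iff_exists_seq :
    PseudoOrbit f δ x y ↔ ∃ n : ℕ, 1 ≤ n ∧ ∃ c : ℕ → M, c 0 = x ∧ c n = y ∧
      ∀ i < n, dist (f (c i)) (c (i + 1)) < δ := by
  constructor
  · intro h
    induction h with
    | @single z hxz =>
      refine ⟨1, le_rfl, update (fun _ => x) 1 z, by simp, by simp, fun i hi => ?_⟩
      obtain rfl : i = 0 := by omega
      simpa using hxz
    | @tail b z _ hbz ih =>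
      obtain ⟨n, hn, c, hc0, hcn, hc⟩ := ih
      refine ⟨n + 1, by omega, update c (n + 1) z, by simp [hc0], by simp, fun i hi => ?_⟩
      rcases Nat.lt_succ_iff_lt_or_eq.1 hi with hi | rfl
      · simpa [update_of_ne (show i ≠ n + 1 by omega), update_of_ne (show i + 1 ≠ n + 1 by omega)]
          using hc i hi
      · simpa [update_of_ne (show i ≠ i + 1 by omega), hcn] using hbz
  · rintro ⟨n, hn, c, rfl, rfl, hc⟩
    exact (transGen_of_succ_of_lt (fun i j => dist (f (c i)) (c j) < δ)
      (fun i hi => by simpa using hc i hi.2) hn).lift c fun _ _ h => h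

theorem PseudoOrbit.trans {z : M} (hxy : PseudoOrbit f δ x y) (hyz : PseudoOrbit f δ y z) :
    PseudoOrbit f δ x z :=
  TransGen.trans hxy hyz

theorem PseudoOrbit.perturb_right (h : PseudoOrbit f ε x y) (hy : ε + dist y y' ≤ δ) :
    PseudoOrbit f δ x y' := by
  obtain ⟨b, hxb, hby⟩ := TransGen.tail'_iff.1 h
  have hεδ : ε ≤ δ := by linarith [dist_nonneg (x := y) (y := y')]
  have hstep : (fun a b => dist (f a) b < ε) ≤ fun a b => dist (f a) b < δ :=
    fun _ _ h => h.trans_le hεδ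
  refine TransGen.tail'_iff.2 ⟨b, ReflTransGen.mono hstep _ _ hxb, ?_⟩
  calc dist (f b) y' ≤ dist (f b) y + dist y y' := dist_triangle _ _ _
    _ < δ := by linarith

theorem PseudoOrbit.perturb_left (h : PseudoOrbit f ε x y) (hx : dist (f x') (f x) + ε ≤ δ) :
    PseudoOrbit f δ x' y := by
  obtain ⟨b, hxb, hby⟩ := TransGen.head'_iff.1 h
  have hεδ : ε ≤ δ := by linarith [dist_nonneg (x := f x') (y := f x)]
  have hstep : (fun a b => dist (f a) b < ε) ≤ fun a b => dist (f a) b < δ :=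
    fun _ _ h => h.trans_le hεδ
  refine TransGen.head'_iff.2 ⟨b, ?_, ReflTransGen.mono hstep _ _ hby⟩
  calc dist (f x') b ≤ dist (f x') (f x) + dist (f x) b := dist_triangle _ _ _
    _ < δ := by linarith

end PseudoOrbit

section ChainReach

variable {M : Type*} [MetricSpace M] {f : M ≃ M} {p x y z : M}

theorem chainReach_iff : ChainReach f x y ↔ ∀ δ > 0, PseudoOrbit f δ x y := by
  simp only [ChainReach, pseudoOrbit_iff_exists_seq]

theorem ChainReach.trans (hxy : ChainReach f x y) (hyz : ChainReach f y z) :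
    ChainReach f x z := by
  rw [chainReach_iff] at *
  exact fun δ hδ => (hxy δ hδ).trans (hyz δ hδ)

instance : IsTrans M (ChainReach f) := ⟨fun _ _ _ => ChainReach.trans⟩

theorem chainReach_of_apply_eq (h : f x = y) : ChainReach f x y :=
  chainReach_iff.2 fun δ hδ => TransGen.single (by simpa [h] using hδ)

theorem isClosed_chainReach (hf : UniformContinuous f) :
    IsClosed {q : M × M | ChainReach f q.1 q.2} := by
  refine isClosed_of_closure_subset fun ⟨x, y⟩ hxy => chainReach_iff.2 fun δ hδ => ?_
  obtain ⟨η, hη, hfη⟩ := Metric.uniformContinuous_iff.1 hf (δ / 3) (by positivity)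
  obtain ⟨⟨a, b⟩, hab, hd⟩ := Metric.mem_closure_iff.1 hxy (min η (δ / 3)) (by positivity)
  simp only [Prod.dist_eq, max_lt_iff, lt_min_iff] at hd
  have hfxa : dist (f x) (f a) < δ / 3 := hfη hd.1.1
  have hby : dist b y < δ / 3 := dist_comm b y ▸ hd.2.2
  exact ((chainReach_iff.1 hab (δ / 3) (by positivity)).perturb_right
    (δ := 2 * δ / 3) (by linarith)).perturb_left (by linarith)

theorem chainReach_apply_self (hf : UniformContinuous f) (hx : ChainReach f x x) :
    ChainReach f (f x) x := by
  refine chainReach_iff.2 fun δ hδ => ?_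
  obtain ⟨η, hη, hfη⟩ := Metric.uniformContinuous_iff.1 hf (δ / 2) (by positivity)
  have hxx := chainReach_iff.1 hx (min η (δ / 2)) (by positivity)
  obtain ⟨b, hxb, hbx⟩ := TransGen.head'_iff.1 hxx
  have hffx : dist (f (f x)) (f b) < δ / 2 := hfη (hxb.trans_le (min_le_left _ _))
  exact PseudoOrbit.perturb_left (TransGen.trans_right hbx hxx)
    (by linarith [min_le_right η (δ / 2)])

theorem ChainReach.map {g : M → M} (hg : UniformContinuous g) (hfg : Function.Commute f g)
    (h : ChainReach f x y) : ChainReach f (g x) (g y) := by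
  refine chainReach_iff.2 fun δ hδ => ?_
  obtain ⟨η, hη, hgη⟩ := Metric.uniformContinuous_iff.1 hg δ hδ
  exact (chainReach_iff.1 h η hη).lift g fun a b hab => by
    show dist (f (g a)) (g b) < δ
    exact hfg a ▸ hgη hab

theorem mem_chainComponent : x ∈ ChainComponent f p ↔ ChainReach f p x ∧ ChainReach f x p :=
  ⟨fun h => h.2, fun h => ⟨h.2.trans h.1, h⟩⟩

theorem mem_chainComponent_self (hx : x ∈ ChainRecurrentSet f) : x ∈ ChainComponent f x :=
  ⟨hx, hx, hx⟩

theorem chainComponent_eq_of_mem (h : x ∈ ChainComponent f p) :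
    ChainComponent f x = ChainComponent f p := by
  rw [mem_chainComponent] at h
  ext y
  simp only [mem_chainComponent]
  exact ⟨fun hy => ⟨h.1.trans hy.1, hy.2.trans h.2⟩, fun hy => ⟨h.2.trans hy.1, hy.2.trans h.1⟩⟩

theorem isClosed_chainComponent (hf : UniformContinuous f) (p : M) :
    IsClosed (ChainComponent f p) := by
  have hR := isClosed_chainReach hf
  have hC : ChainComponent f p =
      (Prod.mk p) ⁻¹' {q | ChainReach f q.1 q.2} ∩ (·, p) ⁻¹' {q | ChainReach f q.1 q.2} :=
    Set.ext fun _ => mem_chainComponent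
  rw [hC]
  exact (hR.preimage (Continuous.prodMk_right p)).inter (hR.preimage (Continuous.prodMk_left p))

theorem apply_mem_chainComponent (hf : UniformContinuous f) (hx : x ∈ ChainComponent f p) :
    f x ∈ ChainComponent f p := by
  rw [mem_chainComponent] at *
  exact ⟨hx.1.trans (chainReach_of_apply_eq rfl),
    (chainReach_apply_self hf (hx.2.trans hx.1)).trans hx.2⟩

theorem symm_apply_mem_chainComponent (hf : UniformContinuous f)
    (hf' : UniformContinuous f.symm) (hx : x ∈ ChainComponent f p) :
    f.symm x ∈ ChainComponent f p := by
  rw [mem_chainComponent] at *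
  have hfx : ChainReach f (f x) x := chainReach_apply_self hf (hx.2.trans hx.1)
  have hx_symm : ChainReach f x (f.symm x) := by
    simpa using hfx.map hf' fun a => by simp
  exact ⟨hx.1.trans hx_symm, (chainReach_of_apply_eq (by simp)).trans hx.2⟩

theorem zpow_apply_mem_chainComponent (hf : UniformContinuous f)
    (hf' : UniformContinuous f.symm) (n : ℤ) (hx : x ∈ ChainComponent f p) :
    (f ^ n) x ∈ ChainComponent f p := by
  induction n using Int.induction_on generalizing x with
  | zero => rwa [zpow_zero, Equiv.Perm.one_apply]
  | succ k ih =>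
    rw [zpow_add_one, Equiv.Perm.mul_apply]
    exact ih (apply_mem_chainComponent hf hx)
  | pred k ih =>
    rw [zpow_sub_one, Equiv.Perm.mul_apply]
    exact ih (symm_apply_mem_chainComponent hf hf' hx)

end ChainReach

section ClusterPt

variable {X : Type*} [TopologicalSpace X] {r : X → X → Prop} {u : ℕ → X} {y : X}

theorem MapClusterPt.rel_right_of_forall_lt (hr : IsClosed {q : X × X | r q.1 q.2})
    (hu : ∀ ⦃i j⦄, i < j → r (u i) (u j)) (hy : MapClusterPt y atTop u) (i : ℕ) :
    r (u i) y :=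
  (hr.preimage (Continuous.prodMk_right (u i))).mem_of_mapClusterPt hy
    ((eventually_gt_atTop i).mono fun _ hj => hu hj)

theorem MapClusterPt.rel_self_of_forall_lt (hr : IsClosed {q : X × X | r q.1 q.2})
    (hu : ∀ ⦃i j⦄, i < j → r (u i) (u j)) (hy : MapClusterPt y atTop u) : r y y :=
  (hr.preimage (Continuous.prodMk_left y)).mem_of_mapClusterPt hy
    (Eventually.of_forall (hy.rel_right_of_forall_lt hr hu))

end ClusterPt

theorem Equiv.Perm.mem_iInter_zpow_image {α : Type*} {f : Equiv.Perm α} {U : Set α} {x : α} :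
    x ∈ ⋂ n : ℤ, (f ^ n) '' U ↔ ∀ n : ℤ, (f ^ n) x ∈ U := by
  simp only [mem_iInter, Set.mem_image_equiv]
  refine ⟨fun h n => ?_, fun h n => ?_⟩
  · simpa [← Equiv.Perm.inv_def] using h (-n)
  · simpa [← Equiv.Perm.inv_def] using h (-n)

section Isolation

variable {M : Type*} [MetricSpace M] {f : M ≃ M} {p x : M} {U : Set M}

theorem exists_chainRecurrent_chainReach_of_forall_pow_mem (hf : UniformContinuous f)
    (hU : IsCompact U) (hx : ∀ n : ℕ, (f ^ n) x ∈ U) :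
    ∃ y ∈ U, y ∈ ChainRecurrentSet f ∧ ChainReach f x y := by
  obtain ⟨y, hyU, hy⟩ := hU.exists_mapClusterPt (f := atTop) (u := fun n : ℕ => (f ^ n) x)
    (tendsto_principal.2 (Eventually.of_forall hx))
  have hu : ∀ ⦃i j : ℕ⦄, i < j → ChainReach f ((f ^ i) x) ((f ^ j) x) :=
    Nat.rel_of_forall_rel_succ_of_lt (ChainReach f) fun n =>
      chainReach_of_apply_eq (by rw [pow_succ', Equiv.Perm.mul_apply])
  have hR := isClosed_chainReach hf
  exact ⟨y, hyU, hy.rel_self_of_forall_lt hR hu, by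
    simpa using hy.rel_right_of_forall_lt hR hu 0⟩

theorem exists_chainRecurrent_chainReach_of_forall_inv_pow_mem (hf : UniformContinuous f)
    (hU : IsCompact U) (hx : ∀ n : ℕ, (f⁻¹ ^ n) x ∈ U) :
    ∃ z ∈ U, z ∈ ChainRecurrentSet f ∧ ChainReach f z x := by
  obtain ⟨z, hzU, hz⟩ := hU.exists_mapClusterPt (f := atTop) (u := fun n : ℕ => (f⁻¹ ^ n) x)
    (tendsto_principal.2 (Eventually.of_forall hx))
  have hu : ∀ ⦃i j : ℕ⦄, i < j → swap (ChainReach f) ((f⁻¹ ^ i) x) ((f⁻¹ ^ j) x) :=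
    Nat.rel_of_forall_rel_succ_of_lt _ fun n =>
      chainReach_of_apply_eq (by rw [pow_succ', Equiv.Perm.mul_apply]; exact f.apply_symm_apply _)
  have hR : IsClosed {q : M × M | swap (ChainReach f) q.1 q.2} :=
    (isClosed_chainReach hf).preimage continuous_swap
  exact ⟨z, hzU, hz.rel_self_of_forall_lt hR hu, by
    simpa using hz.rel_right_of_forall_lt hR hu 0⟩

theorem chainComponent_eq_iInter_zpow_image (hf : UniformContinuous f)
    (hf' : UniformContinuous f.symm) (hU : IsCompact U) (hCU : ChainComponent f p ⊆ U)
    (hUC : U ∩ ChainRecurrentSet f ⊆ ChainComponent f p) :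
    ChainComponent f p = ⋂ n : ℤ, (f ^ n) '' U := by
  ext x
  rw [Equiv.Perm.mem_iInter_zpow_image]
  refine ⟨fun hx n => hCU (zpow_apply_mem_chainComponent hf hf' n hx), fun horbit => ?_⟩
  obtain ⟨y, hyU, hyR, hxy⟩ :=
    exists_chainRecurrent_chainReach_of_forall_pow_mem hf hU fun n => by
      simpa using horbit n
  obtain ⟨z, hzU, hzR, hzx⟩ :=
    exists_chainRecurrent_chainReach_of_forall_inv_pow_mem hf hU fun n => by
      simpa using horbit (-n)
  have hy := mem_chainComponent.1 (hUC ⟨hyU, hyR⟩)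
  have hz := mem_chainComponent.1 (hUC ⟨hzU, hzR⟩)
  exact mem_chainComponent.2 ⟨hz.1.trans hzx, hxy.trans hy.2⟩

theorem isClosed_chainRecurrentSet_diff_chainComponent (hf : UniformContinuous f)
    (hfin : {C : Set M | ∃ q ∈ ChainRecurrentSet f, C = ChainComponent f q}.Finite) (p : M) :
    IsClosed (ChainRecurrentSet f \ ChainComponent f p) := by
  have hdiff : ChainRecurrentSet f \ ChainComponent f p =
      ⋃ C ∈ {C : Set M | ∃ q ∈ ChainRecurrentSet f, C = ChainComponent f q} \
        {ChainComponent f p}, C := by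
    ext x
    simp only [Set.mem_sdiff, mem_iUnion, mem_ofPred_eq, mem_singleton_iff, exists_prop]
    constructor
    · rintro ⟨hxR, hxp⟩
      exact ⟨ChainComponent f x,
        ⟨⟨x, hxR, rfl⟩, fun h => hxp (h ▸ mem_chainComponent_self hxR)⟩,
        mem_chainComponent_self hxR⟩
    · rintro ⟨_, ⟨⟨q, -, rfl⟩, hqp⟩, hxq⟩
      exact ⟨hxq.1, fun hxp => hqp
        ((chainComponent_eq_of_mem hxq).symm.trans (chainComponent_eq_of_mem hxp))⟩
  rw [hdiff]
  exact hfin.sdiff.isClosed_biUnion fun C ⟨⟨q, _, hC⟩, _⟩ => hC ▸ isClosed_chainComponent hf q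

end Isolation

/-- If a homeomorphism of a compact metric space has only finitely many chain components,
then every chain component is locally maximal (isolated): it has a compact neighborhood `U`
with `C = ⋂_{n ∈ ℤ} f^n(U)`. -/
theorem chainComponents_finite_implies_locally_maximal
    {M : Type*} [MetricSpace M] [CompactSpace M]
    (f : M ≃ M) (hf : Continuous f) (hf' : Continuous f.symm)
    (hfin : {C : Set M | ∃ p ∈ ChainRecurrentSet f, C = ChainComponent f p}.Finite) :
    ∀ p ∈ ChainRecurrentSet f, ∃ U : Set M, IsCompact U ∧
      ChainComponent f p ⊆ interior U ∧
      ChainComponent f p = ⋂ n : ℤ, (f ^ n) '' U := by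
  intro p _
  have hfu := CompactSpace.uniformContinuous_of_continuous hf
  have hfu' := CompactSpace.uniformContinuous_of_continuous hf'
  obtain ⟨V, hVo, hCV, hVR⟩ := normal_exists_closure_subset (isClosed_chainComponent hfu p)
    (isClosed_chainRecurrentSet_diff_chainComponent hfu hfin p).isOpen_compl
    fun x hxC hxR => hxR.2 hxC
  have hUc : IsCompact (closure V) := isClosed_closure.isCompact
  have hCU : ChainComponent f p ⊆ interior (closure V) :=
    hCV.trans (interior_maximal subset_closure hVo)
  refine ⟨closure V, hUc, hCU, chainComponent_eq_iInter_zpow_image hfu hfu' hUc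
    (hCU.trans interior_subset) fun x ⟨hxV, hxR⟩ => ?_⟩
  by_contra hxC
  exact hVR hxV ⟨hxR, hxC⟩
end

section
/- Let p and q be hyperbolic fixed points of a diffeomorphism f with q in the homoclinic class H_f(p), and suppose f restricted to H_f(p) has the shadowing property. Then W^s(p) ∩ W^u(q) ≠ ∅ and W^u(p) ∩ W^s(q) ≠ ∅. -/
open Filter

variable {E : Type*} [NormedAddCommGroup E] [NormedSpace ℝ E]

/-- Stable set of a periodic point `p` of period `k`: `f^{kn}(x) → p`. -/
def Ws (f : E ≃ E) (k : ℕ) (p : E) : Set E :=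
  {x | Tendsto (fun n : ℕ => f^[k * n] x) atTop (nhds p)}

/-- Unstable set of a periodic point `p` of period `k`: `f^{-kn}(x) → p`. -/
def Wu (f : E ≃ E) (k : ℕ) (p : E) : Set E :=
  {x | Tendsto (fun n : ℕ => (f.symm : E → E)^[k * n] x) atTop (nhds p)}

/-- Points where the sets `A` and `B` intersect transversally (the tangent cones span). -/
def TransversePts (A B : Set E) : Set E :=
  {x | x ∈ A ∩ B ∧
    Submodule.span ℝ (tangentConeAt ℝ A x) ⊔ Submodule.span ℝ (tangentConeAt ℝ B x) = ⊤}

/-- `p` is a hyperbolic fixed point of the diffeomorphism `f`. -/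
def IsHyperbolicFixedPoint (f : E ≃ E) (p : E) : Prop :=
  f p = p ∧
  ∃ Es Eu : Submodule ℝ E, IsCompl Es Eu ∧
    Es.map (fderiv ℝ f p : E →ₗ[ℝ] E) = Es ∧ Eu.map (fderiv ℝ f p : E →ₗ[ℝ] E) = Eu ∧
    ∃ C > (0 : ℝ), ∃ lam : ℝ, 0 < lam ∧ lam < 1 ∧
      (∀ n : ℕ, ∀ v ∈ Es, ‖((fderiv ℝ f p) ^ n) v‖ ≤ C * lam ^ n * ‖v‖) ∧
      (∀ n : ℕ, ∀ v ∈ Eu, ‖v‖ ≤ C * lam ^ n * ‖((fderiv ℝ f p) ^ n) v‖)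

/-- `q'` (periodic of period `k'`) is homoclinically related to the fixed point `p`. -/
def RelatedToFixed (f : E ≃ E) (p q' : E) (k' : ℕ) : Prop :=
  (TransversePts (Ws f 1 p) (Wu f k' q')).Nonempty ∧
  (TransversePts (Wu f 1 p) (Ws f k' q')).Nonempty

/-!
A hyperbolic fixed point traps nearby orbits: there is `r > 0` such that every forward orbit
staying `r`-close to `p` converges to `p`. (Compare a power `f^N` with its linear part, whose
splitting contracts by `1/4` and expands by `4`; a cone argument on the stable and unstable
components of `f^{Nn} x - p` shows that the unstable component never dominates, so the orbit
decays geometrically.) Consequently a point whose forward orbit eventually tracks an orbit in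
`W^s(p)` closely enough lies in `W^s(p)`, and dually for `W^u` using `f⁻¹`.

The homoclinic class `H` is invariant under `f` and `f⁻¹`. Take a transverse homoclinic point
`w` of `p` that is `δ`-close to `q`. Then `…, q, q, w, f w, f² w, …` is a `δ`-pseudo-orbit in `H`
and a point shadowing it lies in `W^u(q) ∩ W^s(p)`; likewise `…, f⁻² w, f⁻¹ w, q, q, …` yields a
point of `W^u(p) ∩ W^s(q)`.
-/

open Set Function Topology

theorem tendsto_of_forall_tendsto_mul_add {X : Type*} {u : ℕ → X} {l : Filter X} {N : ℕ}
    (hN : N ≠ 0) (h : ∀ j < N, Tendsto (fun m => u (N * m + j)) atTop l) :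
    Tendsto u atTop l := by
  refine fun s hs => mem_map.2 ?_
  have hall : ∀ᶠ m in atTop, ∀ j ∈ Finset.range N, u (N * m + j) ∈ s :=
    (eventually_all_finset _).2 fun j hj => h j (Finset.mem_range.1 hj) hs
  filter_upwards [(Nat.tendsto_div_const_atTop hN).eventually hall] with n hn
  rw [mem_preimage]
  simpa only [Nat.div_add_mod] using hn (n % N) (Finset.mem_range.2 (Nat.mod_lt n (by omega)))

section ConeRecursion

variable {s u : ℕ → ℝ}

theorem le_of_cone_recursion (hs0 : ∀ n, 0 ≤ s n) (hbdd : BddAbove (range u))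
    (hs : ∀ n, s (n + 1) ≤ 3 / 8 * s n + 1 / 8 * u n)
    (hu : ∀ n, 4 * u n - 1 / 8 * (s n + u n) ≤ u (n + 1)) (n : ℕ) : u n ≤ s n := by
  by_contra! hlt
  -- once `u` dominates `s`, it keeps dominating and at least doubles at every step
  have hgrow : ∀ k, s (n + k) < u (n + k) ∧ 2 ^ k * u n ≤ u (n + k) := by
    intro k
    induction k with
    | zero => simpa using hlt
    | succ k ih =>
      have := hs (n + k)
      have := hu (n + k)
      have := hs0 (n + k)
      rw [← add_assoc, pow_succ]
      constructor <;> nlinarith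
  obtain ⟨B, hB⟩ := hbdd
  obtain ⟨k, hk⟩ := pow_unbounded_of_one_lt (B / u n) one_lt_two
  rw [div_lt_iff₀ ((hs0 n).trans_lt hlt)] at hk
  linarith [hB (mem_range_self (n + k)), (hgrow k).2]

theorem tendsto_zero_of_cone_recursion (hs0 : ∀ n, 0 ≤ s n) (hu0 : ∀ n, 0 ≤ u n)
    (hbdd : BddAbove (range u)) (hs : ∀ n, s (n + 1) ≤ 3 / 8 * s n + 1 / 8 * u n)
    (hu : ∀ n, 4 * u n - 1 / 8 * (s n + u n) ≤ u (n + 1)) :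
    Tendsto s atTop (𝓝 0) ∧ Tendsto u atTop (𝓝 0) := by
  have hcone := le_of_cone_recursion hs0 hbdd hs hu
  have hgeom : ∀ n, s n ≤ (1 / 2) ^ n * s 0 := by
    intro n
    induction n with
    | zero => simp
    | succ n ih => rw [pow_succ]; linarith [hs n, hcone n]
  have hs_tend : Tendsto s atTop (𝓝 0) := by
    refine squeeze_zero hs0 hgeom ?_
    simpa using (tendsto_pow_atTop_nhds_zero_of_lt_one (r := (1 / 2 : ℝ))
      (by norm_num) (by norm_num)).mul_const (s 0)
  exact ⟨hs_tend, squeeze_zero hu0 hcone hs_tend⟩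

end ConeRecursion

theorem Submodule.projection_apply_of_mapsTo {R M : Type*} [Ring R] [AddCommGroup M] [Module R M]
    {p q : Submodule R M} (hc : IsCompl p q) {L : M →ₗ[R] M} (hp : MapsTo L p p)
    (hq : MapsTo L q q) (x : M) : p.projection q hc (L x) = L (p.projection q hc x) := by
  conv_lhs => rw [← projection_add_projection_eq_self hc x]
  rw [map_add, map_add, projection_apply_of_mem_left hc (hp (projection_apply_mem hc x)),
    projection_apply_of_mem_right hc (hq (projection_apply_mem hc.symm x)), add_zero]

theorem exists_tendsto_zero_of_hyperbolic_recursion [FiniteDimensional ℝ E] {L : E →L[ℝ] E}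
    {Es Eu : Submodule ℝ E} (hc : IsCompl Es Eu) (hLs : MapsTo L Es Es) (hLu : MapsTo L Eu Eu)
    (hcontr : ∀ v ∈ Es, ‖L v‖ ≤ 1 / 4 * ‖v‖) (hexp : ∀ v ∈ Eu, 4 * ‖v‖ ≤ ‖L v‖) :
    ∃ κ > 0, ∀ z : ℕ → E, BddAbove (range fun n => ‖z n‖) →
      (∀ n, ‖z (n + 1) - L (z n)‖ ≤ κ * ‖z n‖) → Tendsto z atTop (𝓝 0) := by
  set πs := LinearMap.toContinuousLinearMap (Es.projection Eu hc)
  set πu := LinearMap.toContinuousLinearMap (Eu.projection Es hc.symm)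
  set K := ‖πs‖ + ‖πu‖ + 1
  -- `κ = 1 / (8 K)` makes each projection of the error at most `(‖πs z‖ + ‖πu z‖) / 8`
  refine ⟨1 / (8 * K), by positivity, fun z hbdd hstep => ?_⟩
  have hz : ∀ n, ‖z n‖ ≤ ‖πs (z n)‖ + ‖πu (z n)‖ := fun n => by
    conv_lhs => rw [← Submodule.projection_add_projection_eq_self hc (z n)]
    exact norm_add_le _ _
  have herr : ∀ π : E →L[ℝ] E, ‖π‖ ≤ K → ∀ n,
      ‖π (z (n + 1) - L (z n))‖ ≤ 1 / 8 * (‖πs (z n)‖ + ‖πu (z n)‖) := fun π hπ n => by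
    have hK : 0 < K := by positivity
    calc ‖π (z (n + 1) - L (z n))‖ ≤ K * (1 / (8 * K) * ‖z n‖) :=
          (π.le_opNorm _).trans (mul_le_mul hπ (hstep n) (norm_nonneg _) hK.le)
      _ = 1 / 8 * ‖z n‖ := by field_simp
      _ ≤ 1 / 8 * (‖πs (z n)‖ + ‖πu (z n)‖) := by linarith [hz n]
  have hsplit : ∀ (π : E →L[ℝ] E), (∀ x, π (L x) = L (π x)) → ∀ n,
      π (z (n + 1)) = L (π (z n)) + π (z (n + 1) - L (z n)) := fun π hπ n => by
    rw [← hπ, ← map_add, add_sub_cancel]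
  have hs : ∀ n, ‖πs (z (n + 1))‖ ≤ 3 / 8 * ‖πs (z n)‖ + 1 / 8 * ‖πu (z n)‖ := fun n => by
    rw [hsplit πs (Submodule.projection_apply_of_mapsTo hc hLs hLu) n]
    linarith [norm_add_le (L (πs (z n))) (πs (z (n + 1) - L (z n))),
      herr πs (by linarith [norm_nonneg πu]) n,
      hcontr (πs (z n)) (Submodule.projection_apply_mem hc (z n))]
  have hu : ∀ n, 4 * ‖πu (z n)‖ - 1 / 8 * (‖πs (z n)‖ + ‖πu (z n)‖) ≤ ‖πu (z (n + 1))‖ := by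
    intro n
    rw [hsplit πu (Submodule.projection_apply_of_mapsTo hc.symm hLu hLs) n]
    linarith [norm_sub_le_norm_add (L (πu (z n))) (πu (z (n + 1) - L (z n))),
      herr πu (by linarith [norm_nonneg πs]) n,
      hexp (πu (z n)) (Submodule.projection_apply_mem hc.symm (z n))]
  obtain ⟨B, hB⟩ := hbdd
  have hu_bdd : BddAbove (range fun n => ‖πu (z n)‖) := ⟨‖πu‖ * B, by
    rintro _ ⟨n, rfl⟩
    exact (πu.le_opNorm _).trans (by gcongr; exact hB (mem_range_self n))⟩
  obtain ⟨hs0, hu0⟩ := tendsto_zero_of_cone_recursion (fun _ => norm_nonneg _)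
    (fun _ => norm_nonneg _) hu_bdd hs hu
  exact squeeze_zero_norm hz (by simpa using hs0.add hu0)

theorem HasFDerivAt.exists_tendsto_iterate_of_hyperbolic [FiniteDimensional ℝ E] {g : E → E}
    {L : E →L[ℝ] E} {p : E} (hg : HasFDerivAt g L p) (hgp : g p = p) {Es Eu : Submodule ℝ E}
    (hc : IsCompl Es Eu) (hLs : MapsTo L Es Es) (hLu : MapsTo L Eu Eu)
    (hcontr : ∀ v ∈ Es, ‖L v‖ ≤ 1 / 4 * ‖v‖) (hexp : ∀ v ∈ Eu, 4 * ‖v‖ ≤ ‖L v‖) :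
    ∃ r > 0, ∀ x, (∀ n, dist (g^[n] x) p ≤ r) → Tendsto (fun n => g^[n] x) atTop (𝓝 p) := by
  obtain ⟨κ, hκ, hdecay⟩ := exists_tendsto_zero_of_hyperbolic_recursion hc hLs hLu hcontr hexp
  obtain ⟨ε, hε, hlin⟩ := Metric.eventually_nhds_iff.1 (hg.isLittleO.bound hκ)
  refine ⟨ε / 2, half_pos hε, fun x hx => ?_⟩
  have hz : Tendsto (fun n => g^[n] x - p) atTop (𝓝 0) := by
    refine hdecay _ ⟨ε / 2, ?_⟩ fun n => ?_
    · rintro _ ⟨n, rfl⟩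
      simpa [dist_eq_norm] using hx n
    · simpa [iterate_succ_apply', hgp] using hlin ((hx n).trans_lt (half_lt_self hε))
  simpa using hz.add_const p

section StableSet

variable {F : Type*} [NormedAddCommGroup F] {f : F ≃ F} {p x : F}

theorem mem_Ws_one : x ∈ Ws f 1 p ↔ Tendsto (fun n => f^[n] x) atTop (𝓝 p) := by
  simp only [Ws, one_mul, mem_ofPred_eq]

theorem iterate_mem_Ws_iff (m : ℕ) : f^[m] x ∈ Ws f 1 p ↔ x ∈ Ws f 1 p := by
  simp only [mem_Ws_one, ← iterate_add_apply]
  exact tendsto_add_atTop_iff_nat (f := fun n => f^[n] x) m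

theorem mem_Ws_self (h : f p = p) : p ∈ Ws f 1 p :=
  mem_Ws_one.2 (by simp only [iterate_fixed h]; exact tendsto_const_nhds)

theorem mapsTo_Ws : MapsTo f (Ws f 1 p) (Ws f 1 p) :=
  fun _ hx => (iterate_mem_Ws_iff 1).2 hx

theorem mapsTo_symm_Ws : MapsTo f.symm (Ws f 1 p) (Ws f 1 p) :=
  fun x hx => (iterate_mem_Ws_iff 1).1 (by simpa using hx)

end StableSet

theorem Submodule.mapsTo_pow_of_map_eq {S : Submodule ℝ E} {A : E →L[ℝ] E}
    (h : S.map (A : E →ₗ[ℝ] E) = S) (n : ℕ) : MapsTo ⇑(A ^ n) S S := by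
  rw [FunLike.coe_pow_eq_iterate]
  exact MapsTo.iterate (fun v hv => h ▸ Submodule.mem_map_of_mem hv) n

theorem leftInverse_fderiv_symm {F : Type*} [NormedAddCommGroup F] [NormedSpace ℝ F]
    {f : E ≃ F} {x : E} (hf : DifferentiableAt ℝ f x) (hf' : DifferentiableAt ℝ f.symm (f x)) :
    LeftInverse (fderiv ℝ f.symm (f x)) (fderiv ℝ f x) := by
  have h := hf'.hasFDerivAt.comp x hf.hasFDerivAt
  rw [f.symm_comp_self] at h
  exact fun v => congr($(h.unique (hasFDerivAt_id x)) v)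

theorem surjective_fderiv_of_differentiable_symm {f : E ≃ E} (hf : Differentiable ℝ f)
    (hf' : Differentiable ℝ f.symm) (x : E) : Surjective (fderiv ℝ f x) := by
  simpa using (leftInverse_fderiv_symm (f := f.symm) (hf' (f x)) (by simpa using hf x)).surjective

namespace IsHyperbolicFixedPoint

variable {f : E ≃ E} {p : E}

theorem exists_forall_dist_le_imp_mem_Ws [FiniteDimensional ℝ E]
    (hp : IsHyperbolicFixedPoint f p) (hf : DifferentiableAt ℝ f p) :
    ∃ r > 0, ∀ x, (∀ n, dist (f^[n] x) p ≤ r) → x ∈ Ws f 1 p := by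
  obtain ⟨hfp, Es, Eu, hc, hmapS, hmapU, C, -, lam, hlam0, hlam1, hs, hu⟩ := hp
  obtain ⟨N, hN0, hN⟩ : ∃ N ≠ 0, C * lam ^ N ≤ 1 / 4 := by
    have : Tendsto (fun n => C * lam ^ n) atTop (𝓝 0) := by
      simpa using (tendsto_pow_atTop_nhds_zero_of_lt_one hlam0.le hlam1).const_mul C
    exact ((eventually_ne_atTop 0).and (this.eventually (ge_mem_nhds (by norm_num)))).exists
  obtain ⟨r, hr, htrap⟩ := (hf.hasFDerivAt.iterate hfp N).exists_tendsto_iterate_of_hyperbolic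
    (iterate_fixed hfp N) hc (Submodule.mapsTo_pow_of_map_eq hmapS N)
    (Submodule.mapsTo_pow_of_map_eq hmapU N)
    (fun v hv => (hs N v hv).trans (by gcongr))
    (fun v hv => by nlinarith [hu N v hv, norm_nonneg ((fderiv ℝ f p ^ N) v)])
  refine ⟨r, hr, fun x hx => mem_Ws_one.2 (tendsto_of_forall_tendsto_mul_add hN0 fun j _ => ?_)⟩
  simpa only [← iterate_mul, ← iterate_add_apply] using
    htrap (f^[j] x) fun m => by simpa only [← iterate_mul, ← iterate_add_apply] using hx (N * m + j)

theorem eventually_mem_Ws_of_eventually_dist_lt [FiniteDimensional ℝ E]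
    (hp : IsHyperbolicFixedPoint f p) (hf : DifferentiableAt ℝ f p) :
    ∀ᶠ r in 𝓝[>] (0 : ℝ), ∀ x w, w ∈ Ws f 1 p →
      (∀ᶠ n in atTop, dist (f^[n] x) (f^[n] w) < r) → x ∈ Ws f 1 p := by
  obtain ⟨r, hr, htrap⟩ := hp.exists_forall_dist_le_imp_mem_Ws hf
  filter_upwards [Ioo_mem_nhdsGT (half_pos hr)] with ρ hρ x w hw htrack
  obtain ⟨M, hM⟩ : ∃ M, ∀ n ≥ M, dist (f^[n] x) p ≤ r := by
    refine eventually_atTop.1 ?_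
    filter_upwards [htrack, (mem_Ws_one.1 hw).eventually (Metric.ball_mem_nhds p (half_pos hr))]
      with n h1 h2
    linarith [dist_triangle (f^[n] x) (f^[n] w) p, hρ.2, Metric.mem_ball.1 h2]
  rw [← iterate_mem_Ws_iff M]
  exact htrap _ fun n => by rw [← iterate_add_apply]; exact hM _ (by omega)

theorem symm (hp : IsHyperbolicFixedPoint f p) (hf : DifferentiableAt ℝ f p)
    (hf' : DifferentiableAt ℝ f.symm p) : IsHyperbolicFixedPoint f.symm p := by
  obtain ⟨hfp, Es, Eu, hc, hmapS, hmapU, C, hC, lam, hlam0, hlam1, hs, hu⟩ := hp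
  have hfp' : f.symm p = p := f.symm_apply_eq.2 hfp.symm
  set A := fderiv ℝ f p
  set B := fderiv ℝ f.symm p
  have hBA : LeftInverse B A := by
    simpa only [hfp] using leftInverse_fderiv_symm hf (by rwa [hfp])
  have hAB : LeftInverse A B := by
    simpa only [hfp', Equiv.symm_symm] using
      leftInverse_fderiv_symm (f := f.symm) hf' (by simpa [hfp'] using hf)
  have hmap : ∀ S : Submodule ℝ E, S.map (A : E →ₗ[ℝ] E) = S → S.map (B : E →ₗ[ℝ] E) = S :=
    fun S hS => calc
      S.map (B : E →ₗ[ℝ] E) = (S.map (A : E →ₗ[ℝ] E)).map (B : E →ₗ[ℝ] E) := by rw [hS]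
      _ = S.map ((B : E →ₗ[ℝ] E) ∘ₗ A) := (Submodule.map_comp _ _ _).symm
      _ = S := by rw [show (B : E →ₗ[ℝ] E) ∘ₗ A = .id from LinearMap.ext hBA, Submodule.map_id]
  have hABn : ∀ n v, (A ^ n) ((B ^ n) v) = v := fun n v => by
    simp only [FunLike.coe_pow_eq_iterate]
    exact hAB.iterate n v
  refine ⟨hfp', Eu, Es, hc.symm, hmap Eu hmapU, hmap Es hmapS, C, hC, lam, hlam0, hlam1,
    fun n v hv => ?_, fun n v hv => ?_⟩
  · simpa only [hABn] using hu n _ (Submodule.mapsTo_pow_of_map_eq (hmap Eu hmapU) n hv)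
  · simpa only [hABn] using hs n _ (Submodule.mapsTo_pow_of_map_eq (hmap Es hmapS) n hv)

end IsHyperbolicFixedPoint

theorem map_span_tangentConeAt_le {g : E → E} {A : Set E} {x : E} (hg : DifferentiableAt ℝ g x)
    (hA : MapsTo g A A) :
    (Submodule.span ℝ (tangentConeAt ℝ A x)).map (fderiv ℝ g x : E →ₗ[ℝ] E) ≤
      Submodule.span ℝ (tangentConeAt ℝ A (g x)) := by
  rw [Submodule.map_span]
  exact Submodule.span_mono (hg.hasFDerivAt.hasFDerivWithinAt.mapsTo_tangent_cone.mono_right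
    (tangentConeAt_mono hA.image_subset)).image_subset

theorem mapsTo_transversePts {g : E → E} {A B : Set E} (hg : Differentiable ℝ g)
    (hsurj : ∀ x, Surjective (fderiv ℝ g x)) (hA : MapsTo g A A) (hB : MapsTo g B B) :
    MapsTo g (TransversePts A B) (TransversePts A B) := by
  rintro x ⟨⟨hxA, hxB⟩, hspan⟩
  refine ⟨⟨hA hxA, hB hxB⟩, top_unique ?_⟩
  calc ⊤ = (⊤ : Submodule ℝ E).map (fderiv ℝ g x : E →ₗ[ℝ] E) := by
        rw [Submodule.map_top, LinearMap.range_eq_top.2 (hsurj x)]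
    _ = (Submodule.span ℝ (tangentConeAt ℝ A x)).map (fderiv ℝ g x : E →ₗ[ℝ] E) ⊔
          (Submodule.span ℝ (tangentConeAt ℝ B x)).map (fderiv ℝ g x : E →ₗ[ℝ] E) := by
        rw [← hspan, Submodule.map_sup]
    _ ≤ _ := sup_le_sup (map_span_tangentConeAt_le (hg x) hA) (map_span_tangentConeAt_le (hg x) hB)

theorem mapsTo_zpow_closure_transversePts {f : E ≃ E} (hf : Differentiable ℝ f)
    (hf' : Differentiable ℝ f.symm) (p : E) (i : ℤ) :
    MapsTo ⇑(f ^ i) (closure (TransversePts (Ws f 1 p) (Wu f 1 p)))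
      (closure (TransversePts (Ws f 1 p) (Wu f 1 p))) := by
  have hT : MapsTo f (TransversePts (Ws f 1 p) (Wu f 1 p)) (TransversePts (Ws f 1 p) (Wu f 1 p)) :=
    mapsTo_transversePts hf (surjective_fderiv_of_differentiable_symm hf hf') mapsTo_Ws
      (mapsTo_symm_Ws (f := f.symm))
  have hT' : MapsTo f.symm (TransversePts (Ws f 1 p) (Wu f 1 p))
      (TransversePts (Ws f 1 p) (Wu f 1 p)) :=
    mapsTo_transversePts hf' (surjective_fderiv_of_differentiable_symm hf' hf) mapsTo_symm_Ws
      (mapsTo_Ws (f := f.symm))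
  exact ((f.bijOn' (hT.closure hf.continuous) (hT'.closure hf'.continuous)).perm_zpow i).mapsTo

section Shadowing

variable {X : Type*} [PseudoMetricSpace X]

def HasShadowingOn (f : X ≃ X) (H : Set X) : Prop :=
  ∀ ε > (0 : ℝ), ∃ δ > (0 : ℝ), ∀ x : ℤ → X, (∀ i, x i ∈ H) →
    (∀ i : ℤ, dist (f (x i)) (x (i + 1)) < δ) → ∃ y : X, ∀ i : ℤ, dist ((f ^ i) y) (x i) < ε

theorem HasShadowingOn.exists_tracking_of_dist_lt {f : X ≃ X} {H : Set X}
    (hshadow : HasShadowingOn f H) (hH : ∀ i : ℤ, MapsTo ⇑(f ^ i) H H) {ε : ℝ} (hε : 0 < ε) :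
    ∃ δ > 0, ∀ a ∈ H, ∀ b ∈ H, dist a b < δ → ∃ y,
      (∀ᶠ n in atTop, dist (f.symm^[n] y) (f.symm^[n] a) < ε) ∧
      ∀ᶠ n in atTop, dist (f^[n] y) (f^[n] b) < ε := by
  obtain ⟨δ, hδ, hsh⟩ := hshadow ε hε
  refine ⟨δ, hδ, fun a ha b hb hab => ?_⟩
  -- the backward orbit of `a` glued to the forward orbit of `b`; its only jump is `dist a b`
  obtain ⟨y, hy⟩ := hsh (fun i => if i < 0 then (f ^ i) a else (f ^ i) b)
    (fun i => by split_ifs <;> exact hH i ‹_›) fun i => by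
      have hsucc : ∀ c, f ((f ^ i) c) = (f ^ (i + 1)) c := fun c => by
        rw [add_comm, zpow_add, zpow_one, Equiv.Perm.mul_apply]
      rcases lt_trichotomy i (-1) with h | rfl | h
      · rw [if_pos (by omega), if_pos (by omega), hsucc, dist_self]
        exact hδ
      · simpa using hab
      · rw [if_neg (by omega), if_neg (by omega), hsucc, dist_self]
        exact hδ
  refine ⟨y, eventually_atTop.2 ⟨1, fun n hn => ?_⟩, eventually_atTop.2 ⟨0, fun n _ => ?_⟩⟩
  · have hneg : ∀ c, (f ^ (-(n : ℤ))) c = f.symm^[n] c := fun c => by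
      rw [zpow_neg, zpow_natCast, ← inv_pow, Equiv.Perm.coe_pow, Equiv.Perm.inv_def]
    simpa only [if_pos (by omega : -(n : ℤ) < 0), hneg] using hy (-n)
  · have hpos : ∀ c, (f ^ (n : ℤ)) c = f^[n] c := fun c => by
      rw [zpow_natCast, Equiv.Perm.coe_pow]
    simpa only [if_neg (by omega : ¬ (n : ℤ) < 0), hpos] using hy n

end Shadowing

theorem stable_unstable_intersect_of_shadowing_general
    [FiniteDimensional ℝ E]
    (f : E ≃ E) (hf : ContDiff ℝ 1 f) (hf' : ContDiff ℝ 1 f.symm)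
    (p q : E) (hp : IsHyperbolicFixedPoint f p) (hq : IsHyperbolicFixedPoint f q)
    (H : Set E) (hHdef : H = closure (TransversePts (Ws f 1 p) (Wu f 1 p)))
    (hqH : q ∈ H)
    -- f has the shadowing property on H
    (hshadow : ∀ ε > (0 : ℝ), ∃ δ > (0 : ℝ), ∀ x : ℤ → E, (∀ i, x i ∈ H) →
      (∀ i : ℤ, dist (f (x i)) (x (i + 1)) < δ) →
      ∃ y : E, ∀ i : ℤ, dist ((f ^ i) y) (x i) < ε) :
    (Ws f 1 p ∩ Wu f 1 q).Nonempty ∧ (Wu f 1 p ∩ Ws f 1 q).Nonempty := by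
  have hfd := hf.differentiable one_ne_zero
  have hfd' := hf'.differentiable one_ne_zero
  have hp' := hp.symm (hfd p) (hfd' p)
  have hq' := hq.symm (hfd q) (hfd' q)
  -- `Wu f 1 p` is by definition `Ws f.symm 1 p`, so `hWu_p` and `hWu_q` are about unstable sets
  obtain ⟨ε, hε, hWs_p, hWs_q, hWu_p, hWu_q⟩ := (eventually_mem_nhdsWithin.and <|
    (hp.eventually_mem_Ws_of_eventually_dist_lt (hfd p)).and <|
    (hq.eventually_mem_Ws_of_eventually_dist_lt (hfd q)).and <|
    (hp'.eventually_mem_Ws_of_eventually_dist_lt (hfd' p)).and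
    (hq'.eventually_mem_Ws_of_eventually_dist_lt (hfd' q))).exists
  subst hHdef
  obtain ⟨δ, hδ, htrack⟩ := HasShadowingOn.exists_tracking_of_dist_lt hshadow
    (mapsTo_zpow_closure_transversePts hfd hfd' p) hε
  obtain ⟨w, hwq, hwT⟩ := mem_closure_iff_nhds.1 hqH _ (Metric.ball_mem_nhds q hδ)
  have hwH := subset_closure hwT
  constructor
  · obtain ⟨y, hback, hfwd⟩ := htrack q hqH w hwH (by rwa [dist_comm])
    exact ⟨y, hWs_p y w hwT.1.1 hfwd, hWu_q y q (mem_Ws_self hq'.1) hback⟩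
  · obtain ⟨y, hback, hfwd⟩ := htrack w hwH q hqH hwq
    exact ⟨y, hWu_p y w hwT.1.2 hback, hWs_q y q (mem_Ws_self hq.1) hfwd⟩

/-- Let `p, q` be hyperbolic fixed points with `q` in the homoclinic class `H_f(p)`
(the closure of the transverse homoclinic points of `p`, which is assumed to coincide with
the closure of the periodic points homoclinically related to `p`). If `f` has the shadowing
property on `H_f(p)`, then `W^s(p) ∩ W^u(q) ≠ ∅` and `W^u(p) ∩ W^s(q) ≠ ∅`. -/
theorem stable_unstable_intersect_of_shadowing
    [FiniteDimensional ℝ E]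
    (f : E ≃ E) (hf : ContDiff ℝ 1 f) (hf' : ContDiff ℝ 1 f.symm)
    (p q : E) (hp : IsHyperbolicFixedPoint f p) (hq : IsHyperbolicFixedPoint f q)
    (H : Set E) (hHdef : H = closure (TransversePts (Ws f 1 p) (Wu f 1 p)))
    -- Smale: H_f(p) is the closure of the periodic points homoclinically related to p
    (hsmale : H = closure {z | ∃ k' : ℕ, 1 ≤ k' ∧ f^[k'] z = z ∧ RelatedToFixed f p z k'})
    (hqH : q ∈ H)
    -- f has the shadowing property on H
    (hshadow : ∀ ε > (0 : ℝ), ∃ δ > (0 : ℝ), ∀ x : ℤ → E, (∀ i, x i ∈ H) →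
      (∀ i : ℤ, dist (f (x i)) (x (i + 1)) < δ) →
      ∃ y : E, ∀ i : ℤ, dist ((f ^ i) y) (x i) < ε) :
    (Ws f 1 p ∩ Wu f 1 q).Nonempty ∧ (Wu f 1 p ∩ Ws f 1 q).Nonempty :=
  stable_unstable_intersect_of_shadowing_general f hf hf' p q hp hq H hHdef hqH hshadow
end
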